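/- arXiv:1509.02209 — 3 statements merged into one kernel-verified Lean document; each statement's English description precedes it below -/
import Mathlib

section
/- Let x : ℕ → ℚ be a sequence and let n ≥ k ≥ 1 be integers. Then the sum over all compositions (j₁, …, j_k) of n into exactly k parts of the product x(j₁)·x(j₂)⋯x(j_k) equals (k!/n!) · B_{n,k}(1!·x(1), 2!·x(2), 3!·x(3), …). -/
/-- The invert transform of a sequence `x : ℕ → ℚ` (indexed from 1, `x 0` ignored):
`(𝒴x)(0) = 0` and `(𝒴x)(n) = x n + ∑_{j=1}^{n-1} x j * (𝒴x)(n-j)` for `n ≥ 1`. -/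
def invert (x : ℕ → ℚ) : ℕ → ℚ
  | 0 => 0
  | n + 1 => x (n + 1) + ∑ j ∈ Finset.range n, x (j + 1) * invert x (n - j)
  termination_by n => n
  decreasing_by omega

/-- The partial Bell polynomial `B_{n,k}(z₁, z₂, …)`, evaluated at a sequence of rationals
`z` (indexed from 1, `z 0` ignored): the sum over all finitely supported `α : ℕ → ℕ` with
`α 0 = 0`, `∑ i, α i = k` and `∑ i, i * α i = n` of `(n! / ∏ i, (α i)!) * ∏ i (z i / i!)^(α i)`. -/
def partialBell (n k : ℕ) (z : ℕ → ℚ) : ℚ :=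
  ∑ α ∈ ((Finset.range (n + 1)).finsuppAntidiag k).filter
      (fun α => (∑ i ∈ Finset.range (n + 1), i * α i) = n ∧ α 0 = 0),
    ((n.factorial : ℚ) / ∏ i ∈ Finset.range (n + 1), ((α i).factorial : ℚ)) *
      ∏ i ∈ Finset.range (n + 1), (z i / (i.factorial : ℚ)) ^ α i

/-! Both sides are the coefficient of `X ^ n` in `q ^ k`, where `q = ∑_{j=1}^n x j X^j`.
Expanding `q ^ k` as a product of `k` factors, each contributing some `X ^ j` with `j ≥ 1`, gives
the sum over compositions of `n` into `k` parts. Expanding it instead by the multinomial theorem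
gives a sum over multiplicity vectors `α` weighted by `k! / ∏ α_i!`, which is `k!/n!` times the
coefficient `n! / ∏ α_i!` of the partial Bell polynomial, once `z_i = i! x_i` cancels the `i!`. -/

open Finset PowerSeries

@[to_additive]
theorem List.prod_map_eq_prod_range_getD {α M : Type*} [CommMonoid M] (f : α → M) (L : List α)
    (d : α) : (L.map f).prod = ∏ i ∈ Finset.range L.length, f (L.getD i d) := by
  induction L with
  | nil => simp
  | cons a t ih => simp [Finset.prod_range_succ', ih, mul_comm]

theorem List.toFinsupp_ofFn {M : Type*} [Zero M] [DecidableEq M] {k : ℕ} (l : ℕ →₀ M)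
    (hl : l.support ⊆ Finset.range k) : (List.ofFn fun i : Fin k => l i).toFinsupp = l := by
  ext a
  rw [List.toFinsupp_apply]
  by_cases ha : a < k
  · simp [ha]
  · rw [List.getD_eq_default _ _ (by simpa using ha)]
    exact (Finsupp.notMem_support_iff.1 fun h => ha (mem_range.1 (hl h))).symm

def Composition.ofFn {n k : ℕ} (f : Fin k → ℕ) (hpos : ∀ i, 0 < f i) (hsum : ∑ i, f i = n) :
    Composition n where
  blocks := List.ofFn f
  blocks_pos := by simpa [List.mem_ofFn] using hpos
  blocks_sum := by rw [List.sum_ofFn, hsum]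

namespace Composition

variable {n : ℕ} (c : Composition n)

theorem toFinsupp_blocks_mem_finsuppAntidiag :
    c.blocks.toFinsupp ∈ finsuppAntidiag (range c.length) n := by
  rw [mem_finsuppAntidiag, ← c.blocks_length]
  refine ⟨?_, List.toFinsupp_support_subset _⟩
  have := List.sum_map_eq_sum_range_getD (fun j => j) c.blocks 0
  rw [List.map_id', c.blocks_sum] at this
  exact this.symm

theorem toFinsupp_blocks_pos {i : ℕ} (hi : i < c.length) : 0 < c.blocks.toFinsupp i := by
  rw [List.toFinsupp_apply, List.getD_eq_getElem _ _ (by rwa [c.blocks_length])]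
  exact c.blocks_pos (List.getElem_mem _)

theorem ofFn_toFinsupp_blocks :
    Composition.ofFn (fun i : Fin c.length => c.blocks.toFinsupp i)
      (fun i => c.toFinsupp_blocks_pos i.2)
      (by simp) = c := by
  ext1
  simp only [Composition.ofFn, List.toFinsupp_apply_fin]
  exact c.ofFn_blocksFun

end Composition

theorem PowerSeries.coeff_pow_eq_sum_compositions {R : Type*} [CommSemiring R] (p : R⟦X⟧)
    (hp : constantCoeff p = 0) (n k : ℕ) :
    coeff n (p ^ k) =
      ∑ c ∈ univ.filter (fun c : Composition n => c.length = k),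
        (c.blocks.map (coeff · p)).prod := by
  classical
  have hpos (l : ℕ →₀ ℕ) (hl : ∏ i ∈ range k, coeff (l i) p ≠ 0) (i : ℕ)
      (hi : i ∈ range k) : 0 < l i := by
    refine Nat.pos_of_ne_zero fun h => hl (prod_eq_zero hi ?_)
    rwa [h, coeff_zero_eq_constantCoeff_apply]
  rw [coeff_pow, ← sum_filter_of_ne (p := fun l => ∀ i ∈ range k, 0 < l i) fun l _ => hpos l]
  symm
  refine sum_bij' (fun c _ => c.blocks.toFinsupp)
    (fun l hl => Composition.ofFn (fun i : Fin k => l i) ?_ ?_) ?_ ?_ ?_ ?_ ?_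
  · simp only [mem_filter, mem_range] at hl
    exact fun i => hl.2 i i.2
  · simp only [mem_filter, mem_finsuppAntidiag] at hl
    rw [Fin.sum_univ_eq_sum_range (fun i => l i), hl.1.1]
  · rintro c hc
    obtain rfl := (mem_filter.1 hc).2
    exact mem_filter.2 ⟨c.toFinsupp_blocks_mem_finsuppAntidiag,
      fun i hi => c.toFinsupp_blocks_pos (mem_range.1 hi)⟩
  · intro l _
    simp [Composition.ofFn, Composition.length]
  · rintro c hc
    obtain rfl := (mem_filter.1 hc).2
    exact c.ofFn_toFinsupp_blocks
  · intro l hl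
    exact List.toFinsupp_ofFn l (mem_finsuppAntidiag.1 (mem_filter.1 hl).1).2
  · rintro c hc
    obtain rfl := (mem_filter.1 hc).2
    rw [List.prod_map_eq_prod_range_getD _ _ 0, c.blocks_length]
    rfl

theorem PowerSeries.coeff_sum_C_mul_X_pow {R : Type*} [CommSemiring R] (s : Finset ℕ)
    (a : ℕ → R) (m : ℕ) : coeff m (∑ j ∈ s, C (a j) * X ^ j) = if m ∈ s then a m else 0 := by
  simp only [map_sum, coeff_C_mul_X_pow, sum_ite_eq]

theorem PowerSeries.coeff_pow_sum_C_mul_X_pow {R : Type*} [CommSemiring R] (s : Finset ℕ)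
    (a : ℕ → R) (n k : ℕ) :
    coeff n ((∑ j ∈ s, C (a j) * X ^ j) ^ k) =
      ∑ g ∈ (piAntidiag s k).filter (fun g => ∑ j ∈ s, j * g j = n),
        (Nat.multinomial s g : R) * ∏ j ∈ s, a j ^ g j := by
  rw [sum_pow_eq_sum_piAntidiag, map_sum, sum_filter]
  refine sum_congr rfl fun g _ => ?_
  have hmonomial : ∏ j ∈ s, (C (a j) * X ^ j) ^ g j =
      C (∏ j ∈ s, a j ^ g j) * X ^ (∑ j ∈ s, j * g j) := by
    simp only [mul_pow, prod_mul_distrib, ← pow_mul, prod_pow_eq_pow_sum, map_prod, map_pow]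
  rw [hmonomial, ← map_natCast (C (R := R)), ← mul_assoc, ← map_mul, coeff_C_mul_X_pow]
  simp only [eq_comm]

theorem Finset.sum_finsuppAntidiag_eq_sum_piAntidiag {ι μ M : Type*} [DecidableEq ι]
    [AddCommMonoid μ] [HasAntidiagonal μ] [DecidableEq μ] [AddCommMonoid M] (s : Finset ι)
    (n : μ) (F : (ι → μ) → M) : ∑ f ∈ finsuppAntidiag s n, F f = ∑ f ∈ piAntidiag s n, F f := by
  rw [finsuppAntidiag, sum_map, ← sum_attach (piAntidiag s n)]
  rfl

@[to_additive]
theorem Finset.prod_range_succ_eq_prod_Icc {M : Type*} [CommMonoid M] {f : ℕ → M}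
    (h0 : f 0 = 1) (n : ℕ) : ∏ i ∈ range (n + 1), f i = ∏ i ∈ Icc 1 n, f i := by
  rw [Nat.range_succ_eq_Icc_zero, ← insert_Icc_add_one_left_eq_Icc n.zero_le, zero_add,
    prod_insert (by simp), h0, one_mul]

theorem Finset.piAntidiag_Icc_one_eq_filter (n k : ℕ) :
    piAntidiag (Icc 1 n) k = (piAntidiag (range (n + 1)) k).filter (fun g => g 0 = 0) := by
  ext g
  simp only [mem_filter, mem_piAntidiag]
  constructor
  · rintro ⟨hsum, hsupp⟩
    have hg0 : g 0 = 0 := by_contra fun h => by simpa using hsupp 0 h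
    refine ⟨⟨by rwa [sum_range_succ_eq_sum_Icc hg0], fun i hi => ?_⟩, hg0⟩
    have := mem_Icc.1 (hsupp i hi)
    simp only [mem_range]; omega
  · rintro ⟨⟨hsum, hsupp⟩, hg0⟩
    refine ⟨by rwa [sum_range_succ_eq_sum_Icc hg0] at hsum, fun i hi => ?_⟩
    have := mem_range.1 (hsupp i hi)
    have : i ≠ 0 := by rintro rfl; exact hi hg0
    simp only [mem_Icc]; omega

theorem partialBell_eq_sum_piAntidiag (n k : ℕ) (z : ℕ → ℚ) :
    partialBell n k z =
      ∑ g ∈ (piAntidiag (Icc 1 n) k).filter (fun g => ∑ j ∈ Icc 1 n, j * g j = n),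
        ((n.factorial : ℚ) / ∏ j ∈ Icc 1 n, ((g j).factorial : ℚ)) *
          ∏ j ∈ Icc 1 n, (z j / (j.factorial : ℚ)) ^ g j := by
  rw [partialBell, sum_filter, sum_finsuppAntidiag_eq_sum_piAntidiag (F := fun g =>
    if ∑ i ∈ range (n + 1), i * g i = n ∧ g 0 = 0 then
      ((n.factorial : ℚ) / ∏ i ∈ range (n + 1), ((g i).factorial : ℚ)) *
        ∏ i ∈ range (n + 1), (z i / (i.factorial : ℚ)) ^ g i
    else 0), ← sum_filter, piAntidiag_Icc_one_eq_filter, filter_filter]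
  refine sum_congr (filter_congr fun g _ => ?_) fun g hg => ?_
  · rw [sum_range_succ_eq_sum_Icc (by simp), and_comm]
  · have hg0 : g 0 = 0 := (mem_filter.1 hg).2.1
    rw [prod_range_succ_eq_prod_Icc (by simp [hg0]), prod_range_succ_eq_prod_Icc (by simp [hg0])]

theorem Nat.cast_multinomial {K : Type*} [Field K] [CharZero K] {α : Type*} (s : Finset α)
    (f : α → ℕ) :
    (Nat.multinomial s f : K) = (∑ i ∈ s, f i).factorial / ∏ i ∈ s, ((f i).factorial : K) := by
  rw [Nat.multinomial, Nat.cast_div (Nat.prod_factorial_dvd_factorial_sum s f)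
    (Nat.cast_ne_zero.2 (prod_ne_zero_iff.2 fun i _ => Nat.factorial_ne_zero _)),
    Nat.cast_prod]

theorem stmt_5_general (x : ℕ → ℚ) (n k : ℕ) :
    ∑ c ∈ Finset.univ.filter (fun c : Composition n => c.length = k),
        (c.blocks.map fun j => x j).prod
      = ((k.factorial : ℚ) / (n.factorial : ℚ)) *
          partialBell n k (fun i => (i.factorial : ℚ) * x i) := by
  set q : ℚ⟦X⟧ := ∑ j ∈ Icc 1 n, C (x j) * X ^ j
  have hq (m : ℕ) : coeff m q = if m ∈ Icc 1 n then x m else 0 :=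
    coeff_sum_C_mul_X_pow _ _ _
  have hq0 : constantCoeff q = 0 := by simpa using hq 0
  calc _ = ∑ c ∈ univ.filter (fun c : Composition n => c.length = k),
        (c.blocks.map (coeff · q)).prod := by
        refine sum_congr rfl fun c _ => congrArg List.prod (List.map_congr_left fun j hj => ?_)
        rw [hq, if_pos (mem_Icc.2 ⟨c.one_le_blocks hj, c.blocks_le hj⟩)]
    _ = coeff n (q ^ k) := (coeff_pow_eq_sum_compositions q hq0 n k).symm
    _ = ∑ g ∈ (piAntidiag (Icc 1 n) k).filter (fun g => ∑ j ∈ Icc 1 n, j * g j = n),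
        (Nat.multinomial (Icc 1 n) g : ℚ) * ∏ j ∈ Icc 1 n, x j ^ g j :=
      coeff_pow_sum_C_mul_X_pow _ _ _ _
    _ = _ := by
      rw [partialBell_eq_sum_piAntidiag, mul_sum]
      refine sum_congr rfl fun g hg => ?_
      rw [Nat.cast_multinomial, (mem_piAntidiag.1 (mem_filter.1 hg).1).1]
      simp only [ne_eq, Nat.cast_eq_zero, Nat.factorial_ne_zero, not_false_eq_true,
        mul_div_cancel_left₀]
      field_simp

/-- For `n ≥ k ≥ 1`, the sum over all compositions of `n` into exactly `k` parts of the
products `x j₁ ⋯ x j_k` equals `(k!/n!) · B_{n,k}(1!·x 1, 2!·x 2, …)`. -/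
theorem stmt_5 (x : ℕ → ℚ) (n k : ℕ) (hk : 1 ≤ k) (hkn : k ≤ n) :
    ∑ c ∈ Finset.univ.filter (fun c : Composition n => c.length = k),
        (c.blocks.map fun j => x j).prod
      = ((k.factorial : ℚ) / (n.factorial : ℚ)) *
          partialBell n k (fun i => (i.factorial : ℚ) * x i) :=
  stmt_5_general x n k
end

section
/- Let x : ℕ → ℚ be a sequence and let m ≥ 1. For every n ≥ 1, the m-th invert transform of x satisfies (𝒴^m x)(n) = Σ_{k=1}^{n} (k!/n!) · m^(k-1) · B_{n,k}(1!·x(1), 2!·x(2), 3!·x(3), …). -/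
/-!
Let `F = ∑_{n ≥ 1} x n tⁿ` and let `Yₘ` be the generating series of `𝒴^m x`. Since
`1 + Yₘ₊₁ = (1 - Yₘ)⁻¹`, induction on `m` gives `Yₘ = F + m F Yₘ`, i.e.
`Yₘ = F / (1 - m F) = ∑_{k ≥ 1} m^(k-1) Fᵏ`. By the multinomial theorem,
`[tⁿ] Fᵏ = (k! / n!) B_{n,k}(1! x 1, 2! x 2, …)`: this is the exponential generating function
characterization of the partial Bell polynomials, `∑ₙ B_{n,k}(z) tⁿ / n! = (∑ᵢ zᵢ tⁱ / i!)ᵏ / k!`.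
-/

open PowerSeries Finset

theorem Finset.sum_finsuppAntidiag_eq_sum_piAntidiag_s6 {ι M : Type*} [DecidableEq ι]
    [AddCommMonoid M] (s : Finset ι) (k : ℕ) (g : (ι → ℕ) → M) :
    ∑ α ∈ s.finsuppAntidiag k, g α = ∑ α ∈ s.piAntidiag k, g α := by
  rw [finsuppAntidiag, sum_map]
  exact sum_attach _ g

namespace PowerSeries

variable {R : Type*}

section CommSemiring

variable [CommSemiring R]

theorem coe_trunc_eq_sum (f : R⟦X⟧) (n : ℕ) :
    (trunc n f : R⟦X⟧) = ∑ i ∈ range n, C (coeff i f) * X ^ i := by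
  ext j
  simp [coeff_trunc]

theorem coeff_pow_eq_sum_piAntidiag (f : R⟦X⟧) (n k : ℕ) :
    coeff n (f ^ k) =
      ∑ α ∈ (range (n + 1)).piAntidiag k with ∑ i ∈ range (n + 1), i * α i = n,
        (Nat.multinomial (range (n + 1)) α : R) * ∏ i ∈ range (n + 1), coeff i f ^ α i := by
  rw [← coeff_coe_trunc_of_lt n.lt_succ_self, ← trunc_trunc_pow,
    coeff_coe_trunc_of_lt n.lt_succ_self, coe_trunc_eq_sum, sum_pow_eq_sum_piAntidiag, map_sum,
    sum_filter]
  refine sum_congr rfl fun α _ => ?_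
  simp only [mul_pow, prod_mul_distrib, ← map_pow, ← map_prod, ← pow_mul, prod_pow_eq_pow_sum,
    ← map_natCast (C (R := R)), ← mul_assoc, ← map_mul, coeff_C_mul_X_pow, mul_comm _ (α _)]
  exact if_congr eq_comm rfl rfl

end CommSemiring

section CommRing

variable [CommRing R]

theorem eq_sum_Icc_add_of_eq_add_mul {f g : R⟦X⟧} {c : R} (h : g = f + C c * f * g) (N : ℕ) :
    g = ∑ k ∈ Icc 1 N, C c ^ (k - 1) * f ^ k + (C c * f) ^ N * g := by
  induction N with
  | zero => simp
  | succ N ih =>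
    rw [sum_Icc_succ_top (by omega), Nat.add_sub_cancel]
    nth_rw 1 [ih, h]
    ring

theorem coeff_eq_sum_of_eq_add_mul {f g : R⟦X⟧} {c : R} (hf : constantCoeff f = 0)
    (h : g = f + C c * f * g) (n : ℕ) :
    coeff n g = ∑ k ∈ Icc 1 n, c ^ (k - 1) * coeff n (f ^ k) := by
  have hg : constantCoeff g = 0 := by rw [h]; simp [hf]
  have htail : (X : R⟦X⟧) ^ (n + 1) ∣ (C c * f) ^ n * g :=
    pow_succ (X : R⟦X⟧) n ▸ mul_dvd_mul (pow_dvd_pow_of_dvd (dvd_mul_of_dvd_right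
      (X_dvd_iff.mpr hf) _) n) (X_dvd_iff.mpr hg)
  rw [eq_sum_Icc_add_of_eq_add_mul h n, map_add, X_pow_dvd_iff.mp htail n n.lt_succ_self,
    add_zero, map_sum]
  simp only [← map_pow, coeff_C_mul]

end CommRing

end PowerSeries

theorem coeff_pow_eq_partialBell (z : ℕ → ℚ) (n k : ℕ) :
    coeff n ((mk fun i => if i = 0 then 0 else z i / i.factorial) ^ k) =
      k.factorial / n.factorial * partialBell n k z := by
  rw [coeff_pow_eq_sum_piAntidiag, sum_filter, ← sum_finsuppAntidiag_eq_sum_piAntidiag_s6,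
    partialBell, sum_filter, mul_sum]
  refine sum_congr rfl fun α hα => ?_
  simp only [coeff_mk]
  by_cases hα0 : α 0 = 0
  · simp only [hα0, and_true]
    split_ifs
    · have hprod : ∏ i ∈ range (n + 1), (if i = 0 then 0 else z i / i.factorial) ^ α i =
          ∏ i ∈ range (n + 1), (z i / i.factorial) ^ α i :=
        prod_congr rfl fun i _ => by split_ifs with hi <;> simp [hi, hα0]
      have hmult : (Nat.multinomial (range (n + 1)) α : ℚ) =
          k.factorial / ∏ i ∈ range (n + 1), ((α i).factorial : ℚ) := by
        rw [eq_div_iff (by positivity), mul_comm, ← (mem_finsuppAntidiag.mp hα).1]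
        exact_mod_cast Nat.multinomial_spec _ _
      rw [hprod, hmult]
      field_simp
    · rw [mul_zero]
  · rw [prod_eq_zero (mem_range.mpr n.succ_pos) (by simp [zero_pow hα0]), mul_zero, ite_self,
      if_neg (fun h => hα0 h.2), mul_zero]

noncomputable def genFun (x : ℕ → ℚ) : ℚ⟦X⟧ :=
  mk fun i => if i = 0 then 0 else x i

theorem coeff_genFun (x : ℕ → ℚ) (n : ℕ) :
    coeff n (genFun x) = if n = 0 then 0 else x n :=
  coeff_mk _ _

theorem constantCoeff_genFun (x : ℕ → ℚ) : constantCoeff (genFun x) = 0 := by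
  simp [genFun]

theorem invert_zero (x : ℕ → ℚ) : invert x 0 = 0 := by
  rw [invert]

theorem coeff_genFun_invert (x : ℕ → ℚ) (n : ℕ) : coeff n (genFun (invert x)) = invert x n := by
  rw [coeff_genFun]
  split_ifs with hn
  · rw [hn, invert_zero]
  · rfl

theorem genFun_invert (x : ℕ → ℚ) :
    genFun (invert x) = genFun x + genFun x * genFun (invert x) := by
  ext (_ | n)
  · simp [constantCoeff_genFun]
  · rw [map_add, coeff_mul, Nat.sum_antidiagonal_succ, Nat.sum_antidiagonal_eq_sum_range_succ_mk,
      sum_range_succ]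
    simp only [coeff_genFun_invert]
    rw [invert]
    simp [coeff_genFun, invert_zero]

theorem genFun_iterate_invert (x : ℕ → ℚ) (m : ℕ) :
    genFun (invert^[m] x) = genFun x + C (m : ℚ) * genFun x * genFun (invert^[m] x) := by
  rw [map_natCast]
  induction m with
  | zero => simp
  | succ m ih =>
    rw [Function.iterate_succ_apply']
    have h := genFun_invert (invert^[m] x)
    push_cast
    linear_combination (1 - (m : ℚ⟦X⟧) * genFun x) * h + (1 + genFun (invert (invert^[m] x))) * ih

theorem stmt_6_general (x : ℕ → ℚ) (m : ℕ) (n : ℕ) (hn : 1 ≤ n) :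
    (invert^[m] x) n
      = ∑ k ∈ Finset.Icc 1 n,
          ((k.factorial : ℚ) / (n.factorial : ℚ)) * (m : ℚ) ^ (k - 1) *
            partialBell n k (fun i => (i.factorial : ℚ) * x i) := by
  have hx : genFun x = mk fun i => if i = 0 then 0 else i.factorial * x i / i.factorial := by
    simp [genFun, Nat.factorial_ne_zero]
  have hcoeff := coeff_eq_sum_of_eq_add_mul (constantCoeff_genFun x) (genFun_iterate_invert x m) n
  rw [coeff_genFun, if_neg (by omega), hx] at hcoeff
  rw [hcoeff]
  refine sum_congr rfl fun k _ => ?_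
  rw [coeff_pow_eq_partialBell]
  ring

/-- For `m ≥ 1` and `n ≥ 1`,
`(𝒴^m x)(n) = ∑_{k=1}^n (k!/n!) · m^(k-1) · B_{n,k}(1!·x 1, 2!·x 2, …)`. -/
theorem stmt_6 (x : ℕ → ℚ) (m : ℕ) (hm : 1 ≤ m) (n : ℕ) (hn : 1 ≤ n) :
    (invert^[m] x) n
      = ∑ k ∈ Finset.Icc 1 n,
          ((k.factorial : ℚ) / (n.factorial : ℚ)) * (m : ℚ) ^ (k - 1) *
            partialBell n k (fun i => (i.factorial : ℚ) * x i) :=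
  stmt_6_general x m n hn
end

section
/- Fix q ≥ 2 and m ≥ 1, and let f₀ : ℕ → ℚ be the sequence with f₀(1) = 1 and f₀(j) = q·(q−1)^(j−2) for j ≥ 2. Then for every n ≥ 0, the m-th invert transform of f₀ satisfies (𝒴^m f₀)(n+1) = m^n + Σ_{k=1}^{n} Σ_{ℓ=0}^{k−1, 2k ≤ n+1+ℓ} C(k, ℓ) · C(n − k, k − ℓ − 1) · q^(k−ℓ) · (q−1)^(n+1+ℓ−2k) · m^(k−1). (This number counts the words of length n over the alphabet {0, 1, …, q+m−1} avoiding the patterns ii for every i ∈ {0, 1, …, q−1}.) -/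
def Hq (Q : ℚ) (k r : ℕ) : ℚ :=
  ∑ j ∈ Finset.range (r+1),
    (k.choose (j+1) : ℚ) * (r.choose j : ℚ) * Q ^ (j+1) * (Q-1) ^ (r-j)

lemma Hq_zero_left (Q : ℚ) (r : ℕ) : Hq Q 0 r = 0 := by simp [Hq]

lemma Hq_zero_right (Q : ℚ) (k : ℕ) : Hq Q k 0 = (k : ℚ) * Q := by simp [Hq]

lemma Hq_aux (Q : ℚ) (k r : ℕ) :
    ∑ j ∈ Finset.range (r+1),
        (k.choose (j+1) : ℚ) * (r.choose (j+1) : ℚ) * Q ^ (j+2) * (Q-1) ^ (r-j)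
      + Q * (Q-1) ^ (r+1)
    = (Q-1) * ∑ j ∈ Finset.range (r+1),
        (k.choose j : ℚ) * (r.choose j : ℚ) * Q ^ (j+1) * (Q-1) ^ (r-j) := by
  have hsum : ∑ j ∈ Finset.range r,
      (k.choose (j+1) : ℚ) * (r.choose (j+1) : ℚ) * Q ^ (j+2) * (Q-1) ^ (r-j)
      = ∑ j ∈ Finset.range r,
      (Q-1) * ((k.choose (j+1) : ℚ) * (r.choose (j+1) : ℚ) * Q ^ ((j+1)+1) * (Q-1) ^ (r-(j+1))) := by
    apply Finset.sum_congr rfl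
    intro j hj
    simp only [Finset.mem_range] at hj
    rw [show r - j = (r - (j+1)) + 1 by omega]
    ring
  rw [Finset.sum_range_succ, Finset.mul_sum, Finset.sum_range_succ', hsum]
  simp [Nat.choose_succ_self]
  ring

lemma Hq_peel (Q : ℚ) (k r : ℕ) :
    Hq Q k (r+1)
      = (k : ℚ) * Q * (Q-1) ^ (r+1)
        + ∑ j ∈ Finset.range (r+1),
            (k.choose (j+2) : ℚ) * ((r.choose j : ℚ) + (r.choose (j+1) : ℚ))
              * Q ^ (j+2) * (Q-1) ^ (r-j) := by
  rw [Hq, Finset.sum_range_succ']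
  simp only [Nat.choose_zero_right, Nat.cast_one, Nat.choose_one_right, Nat.sub_zero,
    mul_one, pow_one]
  rw [add_comm]
  congr 1
  · norm_num
  · apply Finset.sum_congr rfl
    intro j hj
    rw [show r + 1 - (j + 1) = r - j from by omega, Nat.choose_succ_succ (r) (j)]
    push_cast [Nat.succ_eq_add_one]
    ring

lemma Hq_star (Q : ℚ) (k r : ℕ) :
    Hq Q (k+1) (r+1) = (Q-1) * Hq Q (k+1) r + Hq Q k (r+1) + Hq Q k r := by
  rw [Hq_peel, Hq_peel]
  have pasc : ∀ j ∈ Finset.range (r+1),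
      ((k+1).choose (j+2) : ℚ) * ((r.choose j : ℚ) + (r.choose (j+1) : ℚ))
        * Q ^ (j+2) * (Q-1) ^ (r-j)
      = ((k.choose (j+2) : ℚ) * ((r.choose j : ℚ) + (r.choose (j+1) : ℚ))
          * Q ^ (j+2) * (Q-1) ^ (r-j))
        + Q * ((k.choose (j+1) : ℚ) * (r.choose j : ℚ) * Q ^ (j+1) * (Q-1) ^ (r-j))
        + ((k.choose (j+1) : ℚ) * (r.choose (j+1) : ℚ) * Q ^ (j+2) * (Q-1) ^ (r-j)) := by
    intro j hj
    rw [Nat.choose_succ_succ k (j+1)]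
    push_cast
    ring
  rw [Finset.sum_congr rfl pasc]
  rw [Finset.sum_add_distrib, Finset.sum_add_distrib, ← Finset.mul_sum]
  have hkr : (Q-1) * Hq Q (k+1) r
      = (Q-1) * Hq Q k r
        + ((Q-1) * ∑ j ∈ Finset.range (r+1),
            (k.choose j : ℚ) * (r.choose j : ℚ) * Q ^ (j+1) * (Q-1) ^ (r-j)) := by
    rw [Hq, Hq, ← mul_add, ← Finset.sum_add_distrib]
    congr 1
    apply Finset.sum_congr rfl
    intro j hj
    rw [Nat.choose_succ_succ k j]
    push_cast
    ring
  rw [hkr, ← Hq_aux Q k r]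
  have hH : Hq Q k r = ∑ j ∈ Finset.range (r+1),
      (k.choose (j+1) : ℚ) * (r.choose j : ℚ) * Q ^ (j+1) * (Q-1) ^ (r-j) := rfl
  rw [hH]
  push_cast
  ring

def bq (Q M : ℚ) (n : ℕ) : ℚ :=
  M ^ n + ∑ i ∈ Finset.range n, Hq Q (i+1) (n-1-i) * M ^ i

lemma bq_zero (Q M : ℚ) : bq Q M 0 = 1 := by simp [bq]

lemma bq_one (Q M : ℚ) : bq Q M 1 = M + Q := by
  simp [bq, Hq_zero_right]

lemma bq_rec (Q M : ℚ) (n : ℕ) :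
    bq Q M (n+2) = (Q + M - 1) * bq Q M (n+1) + M * bq Q M n := by
  have key : ∑ i ∈ Finset.range (n+2), Hq Q (i+1) (n+2-1-i) * M ^ i
      = (Q - 1 + M) * (∑ i ∈ Finset.range (n+1), Hq Q (i+1) (n+1-1-i) * M ^ i)
        + M * (∑ i ∈ Finset.range n, Hq Q (i+1) (n-1-i) * M ^ i)
        + Q * M ^ (n+1) := by
    rw [Finset.sum_range_succ]
    have hstep : ∀ i ∈ Finset.range (n+1),
        Hq Q (i+1) (n+2-1-i) * M ^ i
        = (Q-1) * Hq Q (i+1) (n-i) * M ^ i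
          + Hq Q i ((n-i)+1) * M ^ i + Hq Q i (n-i) * M ^ i := by
      intro i hi
      simp only [Finset.mem_range] at hi
      rw [show n+2-1-i = (n-i)+1 from by omega, Hq_star]
      ring
    rw [Finset.sum_congr rfl hstep]
    rw [Finset.sum_add_distrib, Finset.sum_add_distrib]
    have h2 : ∑ i ∈ Finset.range (n+1), Hq Q i ((n-i)+1) * M ^ i
        = M * (∑ i ∈ Finset.range (n+1), Hq Q (i+1) (n-i) * M ^ i)
          - ((n:ℚ)+1) * Q * M ^ (n+1) := by
      rw [Finset.sum_range_succ' (fun i => Hq Q i ((n-i)+1) * M ^ i) n]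
      rw [Finset.mul_sum, Finset.sum_range_succ
        (fun i => M * (Hq Q (i+1) (n-i) * M ^ i)) n]
      have : ∀ i ∈ Finset.range n,
          Hq Q (i+1) ((n-(i+1))+1) * M ^ (i+1) = M * (Hq Q (i+1) (n-i) * M ^ i) := by
        intro i hi
        simp only [Finset.mem_range] at hi
        rw [show (n-(i+1))+1 = n-i from by omega]
        ring
      rw [Finset.sum_congr rfl this, Hq_zero_left, Nat.sub_self, Hq_zero_right]
      push_cast
      ring
    have h3 : ∑ i ∈ Finset.range (n+1), Hq Q i (n-i) * M ^ i
        = M * (∑ i ∈ Finset.range n, Hq Q (i+1) (n-1-i) * M ^ i) := by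
      rw [Finset.sum_range_succ' (fun i => Hq Q i (n-i) * M ^ i) n]
      rw [Finset.mul_sum]
      have : ∀ i ∈ Finset.range n,
          Hq Q (i+1) (n-(i+1)) * M ^ (i+1) = M * (Hq Q (i+1) (n-1-i) * M ^ i) := by
        intro i hi
        rw [show n-(i+1) = n-1-i from by omega]
        ring
      rw [Finset.sum_congr rfl this, Hq_zero_left]
      ring
    rw [h2, h3]
    have hcongr : ∀ i ∈ Finset.range (n+1),
        (Q-1) * Hq Q (i+1) (n-i) * M ^ i = (Q-1) * (Hq Q (i+1) (n+1-1-i) * M ^ i) := by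
      intro i hi
      rw [show n+1-1-i = n-i from by omega]
      ring
    rw [Finset.sum_congr rfl hcongr, ← Finset.mul_sum]
    have hc2 : ∀ i ∈ Finset.range (n+1),
        Hq Q (i+1) (n-i) * M ^ i = Hq Q (i+1) (n+1-1-i) * M ^ i := by
      intro i hi
      rw [show n+1-1-i = n-i from by omega]
    rw [Finset.sum_congr rfl hc2]
    rw [show n+2-1-(n+1) = 0 from by omega, Hq_zero_right]
    push_cast
    ring
  rw [bq, bq, bq, key]
  ring

lemma invert_succ (x : ℕ → ℚ) (n : ℕ) :
    invert x (n+1) = x (n + 1) + ∑ j ∈ Finset.range n, x (j + 1) * invert x (n - j) := by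
  rw [invert]

def GoodSeq (α β : ℚ) (x : ℕ → ℚ) : Prop :=
  x 1 = 1 ∧ x 2 = α + 1 ∧ ∀ n : ℕ, x (n+3) = α * x (n+2) + β * x (n+1)

lemma good_step {α β : ℚ} {x : ℕ → ℚ} (h : GoodSeq α β x) :
    GoodSeq (α+1) (β+1) (invert x) := by
  obtain ⟨h1, h2, h3⟩ := h
  have y1 : invert x 1 = 1 := by rw [invert_succ]; simpa using h1
  have y2 : invert x 2 = α + 2 := by
    rw [invert_succ]
    simp [y1, h1, h2]
    ring
  refine ⟨y1, by rw [y2]; ring, ?_⟩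
  intro n
  have E3 : invert x (n+3)
      = x (n+3) + ∑ j ∈ Finset.range (n+2), x (j+1) * invert x (n+2-j) := invert_succ x (n+2)
  have E2 : invert x (n+2)
      = x (n+2) + ∑ j ∈ Finset.range (n+1), x (j+1) * invert x (n+1-j) := invert_succ x (n+1)
  have E1 : invert x (n+1)
      = x (n+1) + ∑ j ∈ Finset.range n, x (j+1) * invert x (n-j) := invert_succ x n
  have peel : ∑ j ∈ Finset.range (n+2), x (j+1) * invert x (n+2-j)
      = x 1 * invert x (n+2) + x 2 * invert x (n+1)
        + ∑ j ∈ Finset.range n, x (j+3) * invert x (n-j) := by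
    rw [Finset.sum_range_succ' (fun j => x (j+1) * invert x (n+2-j)) (n+1)]
    rw [Finset.sum_range_succ' (fun j => x (j+1+1) * invert x (n+2-(j+1))) n]
    have : ∀ j ∈ Finset.range n,
        x (j+1+1+1) * invert x (n+2-(j+1+1)) = x (j+3) * invert x (n-j) := by
      intro j hj
      rw [show n+2-(j+1+1) = n-j from by omega]
    rw [Finset.sum_congr rfl this]
    norm_num
    ring
  have shiftA : ∑ j ∈ Finset.range n, x (j+2) * invert x (n-j)
      = (∑ j ∈ Finset.range (n+1), x (j+1) * invert x (n+1-j)) - x 1 * invert x (n+1) := by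
    rw [Finset.sum_range_succ' (fun j => x (j+1) * invert x (n+1-j)) n]
    have : ∀ j ∈ Finset.range n,
        x (j+1+1) * invert x (n+1-(j+1)) = x (j+2) * invert x (n-j) := by
      intro j hj
      rw [show n+1-(j+1) = n-j from by omega]
    rw [Finset.sum_congr rfl this]
    norm_num
  have expand : ∑ j ∈ Finset.range n, x (j+3) * invert x (n-j)
      = α * (∑ j ∈ Finset.range n, x (j+2) * invert x (n-j))
        + β * (∑ j ∈ Finset.range n, x (j+1) * invert x (n-j)) := by
    rw [Finset.mul_sum, Finset.mul_sum, ← Finset.sum_add_distrib]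
    apply Finset.sum_congr rfl
    intro j hj
    rw [h3 j]
    ring
  rw [E3, peel, expand, shiftA, h3 n, h1, h2]
  have s2 : ∑ j ∈ Finset.range (n+1), x (j+1) * invert x (n+1-j)
      = invert x (n+2) - x (n+2) := by rw [E2]; ring
  have s1 : ∑ j ∈ Finset.range n, x (j+1) * invert x (n-j)
      = invert x (n+1) - x (n+1) := by rw [E1]; ring
  rw [s2, s1]
  ring

lemma good_iter (q : ℕ) (f₀ : ℕ → ℚ) (hf1 : f₀ 1 = 1)
    (hf2 : ∀ j, 2 ≤ j → f₀ j = (q:ℚ) * ((q:ℚ)-1)^(j-2)) :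
    ∀ m : ℕ, GoodSeq ((q:ℚ) - 1 + m) (m:ℚ) (invert^[m] f₀) := by
  intro m
  induction m with
  | zero =>
    simp only [Function.iterate_zero_apply, Nat.cast_zero]
    refine ⟨hf1, ?_, ?_⟩
    · rw [hf2 2 le_rfl]; norm_num
    · intro n
      rw [hf2 (n+3) (by omega), hf2 (n+2) (by omega),
        show n+3-2 = (n+2-2)+1 from by omega, pow_succ]
      ring
  | succ k ih =>
    have e1 : (q:ℚ) - 1 + ((k:ℚ)+1) = ((q:ℚ)-1+(k:ℚ))+1 := by ring
    push_cast
    rw [e1, Function.iterate_succ_apply']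
    exact good_step ih

lemma innerSumHq (Q : ℚ) (n k : ℕ) (hk1 : 1 ≤ k) (hkn : k ≤ n) :
    ∑ l ∈ (Finset.range k).filter (fun l => 2 * k ≤ n + 1 + l),
        (k.choose l : ℚ) * ((n - k).choose (k - l - 1) : ℚ) *
          Q ^ (k - l) * (Q - 1) ^ (n + 1 + l - 2 * k)
      = Hq Q k (n - k) := by
  rw [Finset.sum_filter]
  have drop : ∀ l ∈ Finset.range k,
      (if 2 * k ≤ n + 1 + l then
        (k.choose l : ℚ) * ((n - k).choose (k - l - 1) : ℚ) *
          Q ^ (k - l) * (Q - 1) ^ (n + 1 + l - 2 * k) else 0)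
      = (k.choose l : ℚ) * ((n - k).choose (k - l - 1) : ℚ) *
          Q ^ (k - l) * (Q - 1) ^ (n + 1 + l - 2 * k) := by
    intro l hl
    simp only [Finset.mem_range] at hl
    split_ifs with h
    · rfl
    · have hz : (n - k).choose (k - l - 1) = 0 := Nat.choose_eq_zero_of_lt (by omega)
      rw [hz]; norm_num
  rw [Finset.sum_congr rfl drop, ← Finset.sum_range_reflect]
  have refl : ∀ j ∈ Finset.range k,
      (k.choose (k-1-j) : ℚ) * ((n-k).choose (k-(k-1-j)-1) : ℚ) *
        Q ^ (k-(k-1-j)) * (Q-1) ^ (n+1+(k-1-j)-2*k)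
      = (k.choose (j+1) : ℚ) * ((n-k).choose j : ℚ) * Q ^ (j+1) * (Q-1) ^ ((n-k)-j) := by
    intro j hj
    simp only [Finset.mem_range] at hj
    rw [show k-(k-1-j)-1 = j from by omega, show k-(k-1-j) = j+1 from by omega,
        show n+1+(k-1-j)-2*k = (n-k)-j from by omega,
        show k-1-j = k-(j+1) from by omega, Nat.choose_symm (by omega)]
  rw [Finset.sum_congr rfl refl, Hq]
  have e1 : ∑ j ∈ Finset.range k,
      (k.choose (j+1) : ℚ) * ((n-k).choose j : ℚ) * Q ^ (j+1) * (Q-1) ^ ((n-k)-j)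
      = ∑ j ∈ Finset.range (n+1),
      (k.choose (j+1) : ℚ) * ((n-k).choose j : ℚ) * Q ^ (j+1) * (Q-1) ^ ((n-k)-j) := by
    apply Finset.sum_subset (by intro a ha; simp only [Finset.mem_range] at *; omega)
    intro j hj hnj
    simp only [Finset.mem_range] at hj hnj
    rw [Nat.choose_eq_zero_of_lt (show k < j+1 from by omega)]
    norm_num
  have e2 : ∑ j ∈ Finset.range ((n-k)+1),
      (k.choose (j+1) : ℚ) * ((n-k).choose j : ℚ) * Q ^ (j+1) * (Q-1) ^ ((n-k)-j)
      = ∑ j ∈ Finset.range (n+1),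
      (k.choose (j+1) : ℚ) * ((n-k).choose j : ℚ) * Q ^ (j+1) * (Q-1) ^ ((n-k)-j) := by
    apply Finset.sum_subset (by intro a ha; simp only [Finset.mem_range] at *; omega)
    intro j hj hnj
    simp only [Finset.mem_range] at hj hnj
    rw [Nat.choose_eq_zero_of_lt (show n-k < j from by omega)]
    norm_num
  rw [e1, e2]

/-- For `q ≥ 2`, `f₀ 1 = 1`, `f₀ j = q(q-1)^(j-2)` for `j ≥ 2`, and `m ≥ 1`:
`(𝒴^m f₀)(n+1) = m^n + ∑_{k=1}^{n} ∑_{ℓ<k, 2k≤n+1+ℓ}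
C(k,ℓ) C(n-k, k-ℓ-1) q^(k-ℓ) (q-1)^(n+1+ℓ-2k) m^(k-1)`,
which counts words of length `n` over `{0,…,q+m-1}` avoiding `ii` for `i ∈ {0,…,q-1}`. -/
theorem stmt_15 (q m : ℕ) (hq : 2 ≤ q) (hm : 1 ≤ m) (f₀ : ℕ → ℚ)
    (hf1 : f₀ 1 = 1) (hf2 : ∀ j, 2 ≤ j → f₀ j = (q : ℚ) * ((q : ℚ) - 1) ^ (j - 2))
    (n : ℕ) :
    (invert^[m] f₀) (n + 1)
      = (m : ℚ) ^ n
        + ∑ k ∈ Finset.Icc 1 n,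
            ∑ l ∈ (Finset.range k).filter (fun l => 2 * k ≤ n + 1 + l),
              (k.choose l : ℚ) * ((n - k).choose (k - l - 1) : ℚ) *
                (q : ℚ) ^ (k - l) * ((q : ℚ) - 1) ^ (n + 1 + l - 2 * k) *
                  (m : ℚ) ^ (k - 1) := by
  obtain ⟨g1, g2, g3⟩ := good_iter q f₀ hf1 hf2 m
  have key : ∀ N : ℕ, invert^[m] f₀ (N+1) = bq (q:ℚ) (m:ℚ) N
      ∧ invert^[m] f₀ (N+2) = bq (q:ℚ) (m:ℚ) (N+1) := by
    intro N
    induction N with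
    | zero => exact ⟨by rw [g1, bq_zero], by rw [g2, bq_one]; ring⟩
    | succ k ih =>
      refine ⟨ih.2, ?_⟩
      rw [show k+1+2 = k+3 from rfl, g3 k, ih.1, ih.2, bq_rec]
      ring
  rw [(key n).1, bq]
  congr 1
  rw [← Finset.Ico_add_one_right_eq_Icc, Finset.sum_Ico_eq_sum_range]
  simp only [show n + 1 - 1 = n from rfl]
  apply Finset.sum_congr rfl
  intro i hi
  simp only [Finset.mem_range] at hi
  rw [← Finset.sum_mul, innerSumHq (q:ℚ) n (1+i) (by omega) (by omega),
    show n - (1+i) = n-1-i from by omega, show 1+i = i+1 from by omega]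
  simp
end
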